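/- arXiv:math/0510462 — 2 statements merged into one kernel-verified Lean document; each statement's English description precedes it below -/
import Mathlib

section
/- Let m ∈ ℝ, m ≠ 0, and let f, 𝔣 : Γ₊ → ℝ be symmetric, differentiable, positively homogeneous of degree m, and elliptic on Γ₊ (all first partial derivatives of both f and 𝔣 are positive on Γ₊). If f is convex and 𝔣 is concave on Γ₊, then for every λ ∈ Γ₊: m · ( 𝔣(λ) · Σᵢ ∂f/∂λᵢ(λ) · λᵢ² − f(λ) · Σᵢ ∂𝔣/∂λᵢ(λ) · λᵢ² ) ≥ 0. -/
/-!
By Euler's identity `∑ᵢ ∂ᵢf(λ) λᵢ = m f(λ)`, the quantity in question equals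
`(∑ᵢ ∂ᵢ𝔣 λᵢ)(∑ᵢ ∂ᵢf λᵢ²) - (∑ᵢ ∂ᵢf λᵢ)(∑ᵢ ∂ᵢ𝔣 λᵢ²)`. Comparing a symmetric convex function at
`λ` and at `λ ∘ (i j)` through the gradient inequality shows that `∇f(λ)` is ordered like `λ`;
likewise `∇𝔣(λ)` is ordered oppositely to `λ`. After symmetrizing the double sum, the `(i, j)` and
`(j, i)` terms combine to `λᵢλⱼ(λᵢ - λⱼ)(∂ᵢf ∂ⱼ𝔣 - ∂ⱼf ∂ᵢ𝔣) ≥ 0`, using positivity of the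
gradients.
-/

open Finset

section Gradient

variable {E : Type*} [NormedAddCommGroup E] [NormedSpace ℝ E] {s : Set E} {f : E → ℝ} {x y : E}

theorem ConvexOn.fderiv_apply_sub_le (hf : ConvexOn ℝ s f) (hx : x ∈ s) (hy : y ∈ s)
    (hd : DifferentiableAt ℝ f x) : fderiv ℝ f x (y - x) ≤ f y - f x := by
  set ℓ : ℝ →ᵃ[ℝ] E := AffineMap.lineMap x y
  have hℓ : HasDerivAt (f ∘ ℓ) (fderiv ℝ f x (y - x)) 0 := by
    have hℓ0 : ℓ 0 = x := AffineMap.lineMap_apply_zero x y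
    have := (hℓ0 ▸ hd).hasFDerivAt.comp_hasDerivAt 0 AffineMap.hasDerivAt_lineMap
    rwa [hℓ0] at this
  simpa [slope_def_field, ℓ] using
    (hf.comp_affineMap ℓ).le_slope_of_hasDerivAt (by simpa [ℓ] using hx) (by simpa [ℓ] using hy)
      one_pos hℓ

theorem fderiv_apply_self_of_homogeneous {m : ℝ} (hd : DifferentiableAt ℝ f x)
    (hhom : ∀ t : ℝ, 0 < t → f (t • x) = t ^ m * f x) : fderiv ℝ f x x = m * f x := by
  have hray : HasDerivAt (fun t : ℝ => f (t • x)) (fderiv ℝ f x x) 1 := by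
    have hd' : DifferentiableAt ℝ f ((1 : ℝ) • x) := by simpa using hd
    have := hd'.hasFDerivAt.comp_hasDerivAt (1 : ℝ) ((hasDerivAt_id (1 : ℝ)).smul_const x)
    rwa [one_smul] at this
  have hpow : HasDerivAt (fun t : ℝ => t ^ m * f x) (m * f x) 1 := by
    simpa using (Real.hasDerivAt_rpow_const (x := 1) (p := m) (Or.inl one_ne_zero)).mul_const (f x)
  refine hray.unique (hpow.congr_of_eventuallyEq ?_)
  filter_upwards [eventually_gt_nhds one_pos] with t ht using hhom t ht

end Gradient

theorem ContinuousLinearMap.sum_apply_single_mul {ι R : Type*} [Fintype ι] [DecidableEq ι]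
    [CommSemiring R] [TopologicalSpace R] (L : (ι → R) →L[R] R) (x : ι → R) :
    ∑ i, L (Pi.single i 1) * x i = L x := by
  conv_rhs => rw [← univ_sum_single x, map_sum]
  refine sum_congr rfl fun i _ => ?_
  have hsingle : Pi.single i (x i) = x i • Pi.single i (1 : R) := by
    rw [← Pi.single_smul', smul_eq_mul, mul_one]
  rw [hsingle, map_smul, smul_eq_mul, mul_comm]

theorem comp_swap_sub_self {ι R : Type*} [DecidableEq ι] [Ring R] (x : ι → R) (i j : ι) :
    x ∘ Equiv.swap i j - x = (x j - x i) • (Pi.single i 1 - Pi.single j 1) := by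
  ext k
  rcases eq_or_ne k i with rfl | hki
  · rcases eq_or_ne k j with rfl | hkj <;> simp [*]
  rcases eq_or_ne k j with rfl | hkj
  · simp [hki]
  · simp [Equiv.swap_apply_of_ne_of_ne hki hkj, hki, hkj]

section Symmetric

variable {ι : Type*} [Fintype ι] [DecidableEq ι] {s : Set (ι → ℝ)} {f : (ι → ℝ) → ℝ}
  {x : ι → ℝ}

theorem ConvexOn.monovary_fderiv_single (hf : ConvexOn ℝ s f) (hx : x ∈ s)
    (hd : DifferentiableAt ℝ f x) (hswap : ∀ i j, x ∘ Equiv.swap i j ∈ s)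
    (hsym : ∀ i j, f (x ∘ Equiv.swap i j) = f x) :
    Monovary (fun i => fderiv ℝ f x (Pi.single i 1)) x := by
  refine monovary_iff_forall_mul_nonneg.2 fun i j => ?_
  have := hf.fderiv_apply_sub_le hx (hswap i j) hd
  rw [hsym, sub_self, comp_swap_sub_self, map_smul, map_sub, smul_eq_mul] at this
  linarith

theorem ConcaveOn.antivary_fderiv_single (hf : ConcaveOn ℝ s f) (hx : x ∈ s)
    (hd : DifferentiableAt ℝ f x) (hswap : ∀ i j, x ∘ Equiv.swap i j ∈ s)
    (hsym : ∀ i j, f (x ∘ Equiv.swap i j) = f x) :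
    Antivary (fun i => fderiv ℝ f x (Pi.single i 1)) x := by
  have hneg := hf.neg.monovary_fderiv_single hx hd.neg hswap fun i j => by simp [hsym]
  refine antivary_iff_forall_mul_nonpos.2 fun i j => ?_
  have := monovary_iff_forall_mul_nonneg.1 hneg i j
  simp only [fderiv_neg, neg_apply] at this
  linarith

end Symmetric

section Rearrangement

variable {ι α : Type*} [Fintype ι] [Field α] [LinearOrder α] [IsStrictOrderedRing α]

theorem sum_sum_le_sum_sum_of_add_swap_le {a b : ι → ι → α}
    (h : ∀ i j, a i j + a j i ≤ b i j + b j i) : ∑ i, ∑ j, a i j ≤ ∑ i, ∑ j, b i j := by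
  have := sum_le_sum fun i (_ : i ∈ univ) => sum_le_sum fun j (_ : j ∈ univ) => h i j
  simp only [sum_add_distrib] at this
  rw [sum_comm (f := fun i j => a j i), sum_comm (f := fun i j => b j i)] at this
  linarith

theorem sum_mul_sum_sq_le_of_monovary_of_antivary {x F G : ι → α} (hx : 0 ≤ x) (hF : 0 ≤ F)
    (hG : 0 ≤ G) (hFx : Monovary F x) (hGx : Antivary G x) :
    (∑ i, F i * x i) * ∑ i, G i * x i ^ 2 ≤ (∑ i, G i * x i) * ∑ i, F i * x i ^ 2 := by
  simp only [sum_mul_sum]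
  refine sum_sum_le_sum_sum_of_add_swap_le fun i j => ?_
  have hF' := hFx.sub_mul_sub_nonneg i j
  have hG' := hGx.sub_mul_sub_nonpos i j
  have key : 0 ≤ (x i - x j) * (F i * G j - F j * G i) := by
    linarith [mul_nonneg (hG j) hF', mul_nonneg (hF j) (neg_nonneg.2 hG')]
  linarith [mul_nonneg (mul_nonneg (hx i) (hx j)) key]

end Rearrangement

theorem lemma23_first_ineq_convex_concave_general (n : ℕ) (m : ℝ)
    (f g : (Fin n → ℝ) → ℝ)
    (Γ : Set (Fin n → ℝ)) (hΓ : Γ = {x : Fin n → ℝ | ∀ i, 0 < x i})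
    (hsymf : ∀ (σ : Equiv.Perm (Fin n)), ∀ x ∈ Γ, f (x ∘ σ) = f x)
    (hsymg : ∀ (σ : Equiv.Perm (Fin n)), ∀ x ∈ Γ, g (x ∘ σ) = g x)
    (hdf : ∀ x ∈ Γ, DifferentiableAt ℝ f x)
    (hdg : ∀ x ∈ Γ, DifferentiableAt ℝ g x)
    (hhomf : ∀ t : ℝ, 0 < t → ∀ x ∈ Γ, f (t • x) = t ^ m * f x)
    (hhomg : ∀ t : ℝ, 0 < t → ∀ x ∈ Γ, g (t • x) = t ^ m * g x)
    (hellf : ∀ x ∈ Γ, ∀ i, 0 < fderiv ℝ f x (Pi.single i 1))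
    (hellg : ∀ x ∈ Γ, ∀ i, 0 < fderiv ℝ g x (Pi.single i 1))
    (hconvf : ConvexOn ℝ Γ f) (hconcg : ConcaveOn ℝ Γ g) :
    ∀ x ∈ Γ,
      0 ≤ m * (g x * ∑ i, fderiv ℝ f x (Pi.single i 1) * (x i) ^ 2
             - f x * ∑ i, fderiv ℝ g x (Pi.single i 1) * (x i) ^ 2) := by
  intro x hx
  have hxpos : ∀ i, 0 < x i := by rwa [hΓ] at hx
  have hswap : ∀ i j, x ∘ Equiv.swap i j ∈ Γ := by
    subst hΓ
    exact fun i j k => hxpos _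
  have eulerf : ∑ i, fderiv ℝ f x (Pi.single i 1) * x i = m * f x := by
    rw [ContinuousLinearMap.sum_apply_single_mul,
      fderiv_apply_self_of_homogeneous (hdf x hx) fun t ht => hhomf t ht x hx]
  have eulerg : ∑ i, fderiv ℝ g x (Pi.single i 1) * x i = m * g x := by
    rw [ContinuousLinearMap.sum_apply_single_mul,
      fderiv_apply_self_of_homogeneous (hdg x hx) fun t ht => hhomg t ht x hx]
  have hrearr := sum_mul_sum_sq_le_of_monovary_of_antivary (fun i => (hxpos i).le)
    (fun i => (hellf x hx i).le) (fun i => (hellg x hx i).le)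
    (hconvf.monovary_fderiv_single hx (hdf x hx) hswap fun _ _ => hsymf _ x hx)
    (hconcg.antivary_fderiv_single hx (hdg x hx) hswap fun _ _ => hsymg _ x hx)
  rw [eulerf, eulerg] at hrearr
  linarith

/-- first inequality of Lemma 2.3, convex/concave case. -/
theorem lemma23_first_ineq_convex_concave (n : ℕ) (m : ℝ) (hm : m ≠ 0)
    (f g : (Fin n → ℝ) → ℝ)
    (Γ : Set (Fin n → ℝ)) (hΓ : Γ = {x : Fin n → ℝ | ∀ i, 0 < x i})
    (hsymf : ∀ (σ : Equiv.Perm (Fin n)), ∀ x ∈ Γ, f (x ∘ σ) = f x)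
    (hsymg : ∀ (σ : Equiv.Perm (Fin n)), ∀ x ∈ Γ, g (x ∘ σ) = g x)
    (hdf : ∀ x ∈ Γ, DifferentiableAt ℝ f x)
    (hdg : ∀ x ∈ Γ, DifferentiableAt ℝ g x)
    (hhomf : ∀ t : ℝ, 0 < t → ∀ x ∈ Γ, f (t • x) = t ^ m * f x)
    (hhomg : ∀ t : ℝ, 0 < t → ∀ x ∈ Γ, g (t • x) = t ^ m * g x)
    (hellf : ∀ x ∈ Γ, ∀ i, 0 < fderiv ℝ f x (Pi.single i 1))
    (hellg : ∀ x ∈ Γ, ∀ i, 0 < fderiv ℝ g x (Pi.single i 1))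
    (hconvf : ConvexOn ℝ Γ f) (hconcg : ConcaveOn ℝ Γ g) :
    ∀ x ∈ Γ,
      0 ≤ m * (g x * ∑ i, fderiv ℝ f x (Pi.single i 1) * (x i) ^ 2
             - f x * ∑ i, fderiv ℝ g x (Pi.single i 1) * (x i) ^ 2) :=
  lemma23_first_ineq_convex_concave_general n m f g Γ hΓ hsymf hsymg hdf hdg hhomf hhomg hellf hellg
    hconvf hconcg
end

section
/- Let m ∈ ℝ, m ≠ 0, and let f, 𝔣 : Γ₊ → ℝ be symmetric, differentiable, positively homogeneous of degree m, and elliptic on Γ₊ (all first partial derivatives of both f and 𝔣 are positive on Γ₊). If f is concave and 𝔣 is convex on Γ₊, then for every λ ∈ Γ₊: m · Σⱼ ( f(λ) · ∂𝔣/∂λⱼ(λ) − 𝔣(λ) · ∂f/∂λⱼ(λ) ) ≤ 0. -/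
/-!
Let `c` be the mean of the coordinates of `x`. The cyclic shifts of `x` average to `c • 1`, so
Jensen's inequality and symmetry give `f x ≤ f (c • 1)` for concave `f`. Together with the
supporting hyperplane at `x` in direction `c • 1 - x` and Euler's identity `Df(x) x = m f(x)`
this yields `m f(x) ≤ c Df(x) 1`, and dually `c Dg(x) 1 ≤ m g(x)` for convex `g`. Ellipticity
makes `m f(x) = Df(x) x` and `m g(x)` nonnegative, so multiplying crosswise gives
`c m (f(x) Dg(x) 1 - g(x) Df(x) 1) ≤ 0` with `c > 0`.
-/

open AffineMap in
theorem ConvexOn.fderiv_sub_le {E : Type*} [NormedAddCommGroup E] [NormedSpace ℝ E]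
    {s : Set E} {f : E → ℝ} {x y : E} (hf : ConvexOn ℝ s f) (hx : x ∈ s) (hy : y ∈ s)
    (hd : DifferentiableAt ℝ f x) :
    fderiv ℝ f x (y - x) ≤ f y - f x := by
  have hline : HasDerivAt (f ∘ lineMap x y) (fderiv ℝ f x (y - x)) (0 : ℝ) :=
    hd.hasFDerivAt.comp_hasDerivAt_of_eq 0 hasDerivAt_lineMap (lineMap_apply_zero x y).symm
  have := (hf.comp_affineMap (lineMap x y)).le_slope_of_hasDerivAt
    (by simpa using hx) (by simpa using hy) zero_lt_one hline
  simpa [slope_def_field] using this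

theorem ConcaveOn.sub_le_fderiv {E : Type*} [NormedAddCommGroup E] [NormedSpace ℝ E]
    {s : Set E} {f : E → ℝ} {x y : E} (hf : ConcaveOn ℝ s f) (hx : x ∈ s) (hy : y ∈ s)
    (hd : DifferentiableAt ℝ f x) :
    f y - f x ≤ fderiv ℝ f x (y - x) := by
  have := hf.neg.fderiv_sub_le hx hy hd.neg
  rw [fderiv_neg] at this
  simp only [neg_apply, Pi.neg_apply] at this
  linarith

theorem fderiv_apply_self_of_rpow_homogeneous {E : Type*} [NormedAddCommGroup E]
    [NormedSpace ℝ E] {f : E → ℝ} {x : E} {m : ℝ} (hd : DifferentiableAt ℝ f x)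
    (hhom : ∀ t : ℝ, 0 < t → f (t • x) = t ^ m * f x) :
    fderiv ℝ f x x = m * f x := by
  have hray : HasDerivAt (fun t : ℝ => f (t • x)) (fderiv ℝ f x x) 1 := by
    simpa [Function.comp_def] using hd.hasFDerivAt.comp_hasDerivAt_of_eq 1
      ((hasDerivAt_id (1 : ℝ)).smul_const x) (one_smul ℝ x).symm
  have hpow : HasDerivAt (fun t : ℝ => t ^ m * f x) (m * f x) 1 := by
    simpa using (Real.hasDerivAt_rpow_const (x := 1) (p := m) (Or.inl one_ne_zero)).mul_const (f x)
  refine hray.unique (hpow.congr_of_eventuallyEq ?_)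
  filter_upwards [eventually_gt_nhds zero_lt_one] with t ht using hhom t ht

theorem ContinuousLinearMap.apply_nonneg_of_apply_single_nonneg {ι : Type*} [Fintype ι]
    [DecidableEq ι] (L : (ι → ℝ) →L[ℝ] ℝ) (hL : ∀ i, 0 ≤ L (Pi.single i 1)) {x : ι → ℝ}
    (hx : 0 ≤ x) : 0 ≤ L x := by
  rw [← Finset.univ_sum_single x, map_sum]
  refine Finset.sum_nonneg fun i _ => ?_
  rw [← mul_one (x i), ← smul_eq_mul, Pi.single_smul', map_smul, smul_eq_mul]
  exact mul_nonneg (hx i) (hL i)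

section Symmetric

variable {n : ℕ} [NeZero n] {s : Set (Fin n → ℝ)} {x : Fin n → ℝ}

theorem sum_inv_smul_comp_addRight (x : Fin n → ℝ) :
    ∑ k : Fin n, (n : ℝ)⁻¹ • (x ∘ Equiv.addRight k) = ((∑ i, x i) / n) • (1 : Fin n → ℝ) := by
  ext i
  simp only [Finset.sum_apply, Pi.smul_apply, Function.comp_apply, Equiv.coe_addRight,
    ← Equiv.coe_addLeft, smul_eq_mul, Pi.one_apply, mul_one, ← Finset.mul_sum]
  rw [Equiv.sum_comp (Equiv.addLeft i) x, div_eq_inv_mul]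

theorem sum_inv_eq_one : ∑ _k : Fin n, (n : ℝ)⁻¹ = 1 := by
  simp [NeZero.ne n]

theorem Convex.mean_smul_one_mem (hs : Convex ℝ s)
    (hperm : ∀ σ : Equiv.Perm (Fin n), ∀ x ∈ s, x ∘ σ ∈ s) (hx : x ∈ s) :
    ((∑ i, x i) / n) • (1 : Fin n → ℝ) ∈ s := by
  rw [← sum_inv_smul_comp_addRight]
  exact hs.sum_mem (fun _ _ => by positivity) sum_inv_eq_one fun k _ => hperm _ x hx

theorem ConcaveOn.le_apply_mean_smul_one {f : (Fin n → ℝ) → ℝ} (hf : ConcaveOn ℝ s f)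
    (hperm : ∀ σ : Equiv.Perm (Fin n), ∀ x ∈ s, x ∘ σ ∈ s)
    (hsym : ∀ σ : Equiv.Perm (Fin n), ∀ x ∈ s, f (x ∘ σ) = f x) (hx : x ∈ s) :
    f x ≤ f (((∑ i, x i) / n) • 1) := by
  have := hf.le_map_sum (t := Finset.univ) (fun _ _ => by positivity) sum_inv_eq_one
    fun k _ => hperm (Equiv.addRight k) x hx
  rwa [sum_inv_smul_comp_addRight, Finset.sum_congr rfl fun k _ => by rw [hsym _ x hx],
    ← Finset.sum_smul, sum_inv_eq_one, one_smul] at this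

theorem ConcaveOn.mul_le_mean_mul_fderiv_one {f : (Fin n → ℝ) → ℝ} {m : ℝ}
    (hf : ConcaveOn ℝ s f) (hperm : ∀ σ : Equiv.Perm (Fin n), ∀ x ∈ s, x ∘ σ ∈ s)
    (hsym : ∀ σ : Equiv.Perm (Fin n), ∀ x ∈ s, f (x ∘ σ) = f x) (hx : x ∈ s)
    (hd : DifferentiableAt ℝ f x) (hhom : ∀ t : ℝ, 0 < t → f (t • x) = t ^ m * f x) :
    m * f x ≤ (∑ i, x i) / n * fderiv ℝ f x 1 := by
  have hsupp := hf.sub_le_fderiv hx (hf.1.mean_smul_one_mem hperm hx) hd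
  rw [map_sub, map_smul, smul_eq_mul, fderiv_apply_self_of_rpow_homogeneous hd hhom] at hsupp
  linarith [hf.le_apply_mean_smul_one hperm hsym hx]

theorem ConvexOn.mean_mul_fderiv_one_le {f : (Fin n → ℝ) → ℝ} {m : ℝ}
    (hf : ConvexOn ℝ s f) (hperm : ∀ σ : Equiv.Perm (Fin n), ∀ x ∈ s, x ∘ σ ∈ s)
    (hsym : ∀ σ : Equiv.Perm (Fin n), ∀ x ∈ s, f (x ∘ σ) = f x) (hx : x ∈ s)
    (hd : DifferentiableAt ℝ f x) (hhom : ∀ t : ℝ, 0 < t → f (t • x) = t ^ m * f x) :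
    (∑ i, x i) / n * fderiv ℝ f x 1 ≤ m * f x := by
  have := hf.neg.mul_le_mean_mul_fderiv_one (m := m) hperm
    (fun σ y hy => by simp [hsym σ y hy]) hx hd.neg fun t ht => by simp [hhom t ht]
  rw [fderiv_neg] at this
  simp only [Pi.neg_apply, neg_apply] at this
  linarith

end Symmetric

theorem lemma23_second_ineq_concave_convex_general (n : ℕ) (m : ℝ)
    (f g : (Fin n → ℝ) → ℝ)
    (Γ : Set (Fin n → ℝ)) (hΓ : Γ = {x : Fin n → ℝ | ∀ i, 0 < x i})
    (hsymf : ∀ (σ : Equiv.Perm (Fin n)), ∀ x ∈ Γ, f (x ∘ σ) = f x)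
    (hsymg : ∀ (σ : Equiv.Perm (Fin n)), ∀ x ∈ Γ, g (x ∘ σ) = g x)
    (hdf : ∀ x ∈ Γ, DifferentiableAt ℝ f x)
    (hdg : ∀ x ∈ Γ, DifferentiableAt ℝ g x)
    (hhomf : ∀ t : ℝ, 0 < t → ∀ x ∈ Γ, f (t • x) = t ^ m * f x)
    (hhomg : ∀ t : ℝ, 0 < t → ∀ x ∈ Γ, g (t • x) = t ^ m * g x)
    (hellf : ∀ x ∈ Γ, ∀ i, 0 < fderiv ℝ f x (Pi.single i 1))
    (hellg : ∀ x ∈ Γ, ∀ i, 0 < fderiv ℝ g x (Pi.single i 1))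
    (hconcf : ConcaveOn ℝ Γ f) (hconvg : ConvexOn ℝ Γ g) :
    ∀ x ∈ Γ,
      m * ∑ j, (f x * fderiv ℝ g x (Pi.single j 1)
              - g x * fderiv ℝ f x (Pi.single j 1)) ≤ 0 := by
  subst hΓ
  intro x hx
  rcases n.eq_zero_or_pos with rfl | hn
  · simp
  have : NeZero n := ⟨hn.ne'⟩
  have hperm : ∀ σ : Equiv.Perm (Fin n), ∀ x ∈ {x : Fin n → ℝ | ∀ i, 0 < x i},
      x ∘ σ ∈ {x : Fin n → ℝ | ∀ i, 0 < x i} := fun σ x hx i => hx (σ i)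
  have hmean : 0 < (∑ i, x i) / n := by
    have : 0 < ∑ i, x i := Finset.sum_pos (fun i _ => hx i) Finset.univ_nonempty
    positivity
  have hsum (F : (Fin n → ℝ) → ℝ) : ∑ j, fderiv ℝ F x (Pi.single j 1) = fderiv ℝ F x 1 := by
    rw [← map_sum]; congr 1; exact Finset.univ_sum_single 1
  have hmf : 0 ≤ m * f x := fderiv_apply_self_of_rpow_homogeneous (hdf x hx) (hhomf · · x hx) ▸
    (fderiv ℝ f x).apply_nonneg_of_apply_single_nonneg (hellf x hx · |>.le) (hx · |>.le)
  have hmg : 0 ≤ m * g x := fderiv_apply_self_of_rpow_homogeneous (hdg x hx) (hhomg · · x hx) ▸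
    (fderiv ℝ g x).apply_nonneg_of_apply_single_nonneg (hellg x hx · |>.le) (hx · |>.le)
  have hf := hconcf.mul_le_mean_mul_fderiv_one hperm hsymf hx (hdf x hx) (hhomf · · x hx)
  have hg := hconvg.mean_mul_fderiv_one_le hperm hsymg hx (hdg x hx) (hhomg · · x hx)
  rw [Finset.sum_sub_distrib, ← Finset.mul_sum, ← Finset.mul_sum, hsum, hsum]
  refine nonpos_of_mul_nonpos_right ?_ hmean
  nlinarith [mul_le_mul_of_nonneg_left hg hmf, mul_le_mul_of_nonneg_left hf hmg]

/-- second inequality of Lemma 2.3, concave/convex case. -/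
theorem lemma23_second_ineq_concave_convex (n : ℕ) (m : ℝ) (hm : m ≠ 0)
    (f g : (Fin n → ℝ) → ℝ)
    (Γ : Set (Fin n → ℝ)) (hΓ : Γ = {x : Fin n → ℝ | ∀ i, 0 < x i})
    (hsymf : ∀ (σ : Equiv.Perm (Fin n)), ∀ x ∈ Γ, f (x ∘ σ) = f x)
    (hsymg : ∀ (σ : Equiv.Perm (Fin n)), ∀ x ∈ Γ, g (x ∘ σ) = g x)
    (hdf : ∀ x ∈ Γ, DifferentiableAt ℝ f x)
    (hdg : ∀ x ∈ Γ, DifferentiableAt ℝ g x)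
    (hhomf : ∀ t : ℝ, 0 < t → ∀ x ∈ Γ, f (t • x) = t ^ m * f x)
    (hhomg : ∀ t : ℝ, 0 < t → ∀ x ∈ Γ, g (t • x) = t ^ m * g x)
    (hellf : ∀ x ∈ Γ, ∀ i, 0 < fderiv ℝ f x (Pi.single i 1))
    (hellg : ∀ x ∈ Γ, ∀ i, 0 < fderiv ℝ g x (Pi.single i 1))
    (hconcf : ConcaveOn ℝ Γ f) (hconvg : ConvexOn ℝ Γ g) :
    ∀ x ∈ Γ,
      m * ∑ j, (f x * fderiv ℝ g x (Pi.single j 1)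
              - g x * fderiv ℝ f x (Pi.single j 1)) ≤ 0 :=
  lemma23_second_ineq_concave_convex_general n m f g Γ hΓ hsymf hsymg hdf hdg hhomf hhomg hellf
    hellg hconcf hconvg
end
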